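/- For the Aczel slash defined on BDi3 sentences: for every sentence A, |⁺A implies ⊢_{i3} A. -/
import Mathlib


inductive Fm : Type where
  | atom : Nat → Fm
  | bot : Fm
  | snot : Fm → Fm
  | and : Fm → Fm → Fm
  | or : Fm → Fm → Fm
  | imp : Fm → Fm → Fm
deriving DecidableEq

/-- Intuitionistic/Boolean negation `¬A := A → ⊥`. -/
def negFm (A : Fm) : Fm := Fm.imp A Fm.bot

/-- Biconditional `A ↔ B := (A→B) ∧ (B→A)`. -/
def iffFm (A B : Fm) : Fm := Fm.and (Fm.imp A B) (Fm.imp B A)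

/-- Hilbert-style derivability: intuitionistic positive axioms Ax1, Ax2, Ax4–Ax10,
modus ponens, plus extra axioms from `Ax`. -/
inductive Deriv (Ax : Fm → Prop) : Fm → Prop where
  | extra {A} : Ax A → Deriv Ax A
  | ax1 (A B) : Deriv Ax (Fm.imp A (Fm.imp B A))
  | ax2 (A B C) : Deriv Ax (Fm.imp (Fm.imp A (Fm.imp B C)) (Fm.imp (Fm.imp A B) (Fm.imp A C)))
  | ax4 (A B) : Deriv Ax (Fm.imp (Fm.and A B) A)
  | ax5 (A B) : Deriv Ax (Fm.imp (Fm.and A B) B)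
  | ax6 (A B C) : Deriv Ax (Fm.imp (Fm.imp C A) (Fm.imp (Fm.imp C B) (Fm.imp C (Fm.and A B))))
  | ax7 (A B) : Deriv Ax (Fm.imp A (Fm.or A B))
  | ax8 (A B) : Deriv Ax (Fm.imp B (Fm.or A B))
  | ax9 (A B C) : Deriv Ax (Fm.imp (Fm.imp A C) (Fm.imp (Fm.imp B C) (Fm.imp (Fm.or A B) C)))
  | ax10 (A) : Deriv Ax (Fm.imp Fm.bot A)
  | mp {A B} : Deriv Ax (Fm.imp A B) → Deriv Ax A → Deriv Ax B

/-- The characteristic axioms of (propositional) BDi3. -/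
inductive BDi3Ax : Fm → Prop where
  | toSnotBot (A) : BDi3Ax (Fm.imp A (Fm.snot Fm.bot))
  | dne (A) : BDi3Ax (iffFm (Fm.snot (Fm.snot A)) A)
  | dmAnd (A B) : BDi3Ax (iffFm (Fm.snot (Fm.and A B)) (Fm.or (Fm.snot A) (Fm.snot B)))
  | dmOr (A B) : BDi3Ax (iffFm (Fm.snot (Fm.or A B)) (Fm.and (Fm.snot A) (Fm.snot B)))
  | dmImp (A B) : BDi3Ax (iffFm (Fm.snot (Fm.imp A B)) (Fm.and (negFm (Fm.snot A)) (Fm.snot B)))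
  | i2 (A) : BDi3Ax (Fm.imp (Fm.snot A) (negFm A))
  | i3 (A) : BDi3Ax (negFm (negFm (Fm.or A (Fm.snot A))))

/-- The Aczel slash for BDi3: `(slash A).1` is `|⁺A`, `(slash A).2` is `|⁻A`. -/
def slash : Fm → Prop × Prop
  | .atom n => (Deriv BDi3Ax (Fm.atom n), Deriv BDi3Ax (Fm.snot (Fm.atom n)))
  | .bot => (False, True)
  | .snot A => ((slash A).2, (slash A).1)
  | .and A B => ((slash A).1 ∧ (slash B).1, (slash A).2 ∨ (slash B).2)
  | .or A B => ((slash A).1 ∨ (slash B).1, (slash A).2 ∧ (slash B).2)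
  | .imp A B =>
      (Deriv BDi3Ax (Fm.imp A B) ∧ ((slash A).1 → (slash B).1),
       Deriv BDi3Ax (negFm (Fm.snot A)) ∧ (slash B).2)

namespace SlashAux

abbrev D := Deriv BDi3Ax

theorem idD (A : Fm) : D (Fm.imp A A) :=
  Deriv.mp (Deriv.mp (Deriv.ax2 A (Fm.imp A A) A) (Deriv.ax1 A (Fm.imp A A))) (Deriv.ax1 A A)

theorem andIntro {A B : Fm} (hA : D A) (hB : D B) : D (Fm.and A B) := by
  have t : D (Fm.imp Fm.bot Fm.bot) := idD _
  have ha : D (Fm.imp (Fm.imp Fm.bot Fm.bot) A) := Deriv.mp (Deriv.ax1 A _) hA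
  have hb : D (Fm.imp (Fm.imp Fm.bot Fm.bot) B) := Deriv.mp (Deriv.ax1 B _) hB
  exact Deriv.mp (Deriv.mp (Deriv.mp (Deriv.ax6 A B _) ha) hb) t

theorem iffMpr {A B : Fm} (h : D (iffFm A B)) (hb : D B) : D A :=
  Deriv.mp (Deriv.mp (Deriv.ax5 _ _) h) hb

theorem iffMp {A B : Fm} (h : D (iffFm A B)) (ha : D A) : D B :=
  Deriv.mp (Deriv.mp (Deriv.ax4 _ _) h) ha

theorem main (A : Fm) : ((slash A).1 → D A) ∧ ((slash A).2 → D (Fm.snot A)) := by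
  induction A with
  | atom n => exact ⟨id, id⟩
  | bot =>
    refine ⟨fun h => h.elim, fun _ => ?_⟩
    exact Deriv.mp (Deriv.extra (BDi3Ax.toSnotBot (Fm.imp Fm.bot Fm.bot))) (idD _)
  | snot A ih =>
    refine ⟨ih.2, fun h => ?_⟩
    exact iffMpr (Deriv.extra (BDi3Ax.dne A)) (ih.1 h)
  | and A B ihA ihB =>
    refine ⟨fun h => andIntro (ihA.1 h.1) (ihB.1 h.2), fun h => ?_⟩
    refine iffMpr (Deriv.extra (BDi3Ax.dmAnd A B)) ?_
    rcases h with h | h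
    · exact Deriv.mp (Deriv.ax7 _ _) (ihA.2 h)
    · exact Deriv.mp (Deriv.ax8 _ _) (ihB.2 h)
  | or A B ihA ihB =>
    constructor
    · rintro (h | h)
      · exact Deriv.mp (Deriv.ax7 _ _) (ihA.1 h)
      · exact Deriv.mp (Deriv.ax8 _ _) (ihB.1 h)
    · intro h
      exact iffMpr (Deriv.extra (BDi3Ax.dmOr A B)) (andIntro (ihA.2 h.1) (ihB.2 h.2))
  | imp A B ihA ihB =>
    refine ⟨fun h => h.1, fun h => ?_⟩
    exact iffMpr (Deriv.extra (BDi3Ax.dmImp A B)) (andIntro h.1 (ihB.2 h.2))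

end SlashAux

/-- Lemma 17: `|⁺A` implies `⊢_{i3} A`. -/
theorem slash_implies_derivable (A : Fm) : (slash A).1 → Deriv BDi3Ax A :=
  (SlashAux.main A).1
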